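/- Let T be an interval exchange transformation without connection of length ≥ 1. Then for every word w ∈ L(T), the extension graph E(w) is acyclic. -/

import Mathlib

/-! Attach to a left vertex `a` of `E(w)` the interval `J_a` and to a right vertex `b` the
interval `I_{wb}`. The `J_a` are pairwise disjoint, so are the `I_{wb}`, and an edge `a — b`,
i.e. `awb ∈ L(T)`, gives a point of `J_a ∩ I_{wb}`. On a cycle, choose on every edge a point
common to the intervals of its two ends and look at the edge carrying the largest one: by
convexity, one of the two neighbouring edges' points lies in the intervals of two distinct
neighbours of a same vertex, which are disjoint. -/

namespace Paper

/-- An interval exchange transformation (with flips) on the open interval `]l, r[`,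
with intervals indexed by the finite alphabet `A` : the families `(Ia a)` and `(Ja a)`
are partitions of `]l, r[` minus `Card A - 1` points into nonempty open intervals
(pairwise disjoint, hence ordered by suitable total orders on `A`), with `Ia a` and
`Ja a` of the same length, and the restriction of `T` to `Ia a` is either a translation
or a symmetry from `Ia a` onto `Ja a`. -/
structure IET (A : Type*) [Fintype A] where
  l : ℝ
  r : ℝ
  hlr : l < r
  Ia : A → Set ℝ
  Ja : A → Set ℝ
  T : ℝ → ℝ
  hIa : ∀ a, ∃ p q : ℝ, p < q ∧ Ia a = Set.Ioo p q
  hJa : ∀ a, ∃ p q : ℝ, p < q ∧ Ja a = Set.Ioo p q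
  hIsub : ∀ a, Ia a ⊆ Set.Ioo l r
  hJsub : ∀ a, Ja a ⊆ Set.Ioo l r
  hIdisj : Pairwise (Function.onFun Disjoint Ia)
  hJdisj : Pairwise (Function.onFun Disjoint Ja)
  hIcard : (Set.Ioo l r \ ⋃ a, Ia a).ncard = Fintype.card A - 1
  hJcard : (Set.Ioo l r \ ⋃ a, Ja a).ncard = Fintype.card A - 1
  hlen : ∀ a, MeasureTheory.volume (Ia a) = MeasureTheory.volume (Ja a)
  hTimage : ∀ a, T '' Ia a = Ja a
  hTiso : ∀ a, (∃ t : ℝ, ∀ x ∈ Ia a, T x = x + t) ∨ (∃ s : ℝ, ∀ x ∈ Ia a, T x = s - x)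

namespace IET

variable {A : Type*} [Fintype A] (E : IET A)

/-- The interval `I_w` of points whose orbit starts by visiting the intervals
prescribed by the word `w` (with `I_ε = ]l, r[`). -/
def Iw (w : List A) : Set ℝ :=
  {x ∈ Set.Ioo E.l E.r | ∀ i : Fin w.length, E.T^[(i : ℕ)] x ∈ E.Ia (w.get i)}

/-- `J_w = T^{|w|}(I_w)`. -/
def Jw (w : List A) : Set ℝ := E.T^[w.length] '' E.Iw w

/-- The natural coding language `L(T)`: the set of factors of the natural codings
`Σ_T(z)` of points `z` whose whole orbit stays in `⋃ a, I_a`. -/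
def lang : Set (List A) :=
  {w | ∃ z ∈ Set.Ioo E.l E.r, (∀ n : ℕ, E.T^[n] z ∈ ⋃ a, E.Ia a) ∧
        ∃ k : ℕ, ∀ i : Fin w.length, E.T^[k + (i : ℕ)] z ∈ E.Ia (w.get i)}

/-- The singularities of `T`: the points of `]l, r[` separating the intervals `I_a`. -/
def singT : Set ℝ := Set.Ioo E.l E.r \ ⋃ a, E.Ia a

/-- The singularities of `T⁻¹`: the points of `]l, r[` separating the intervals `J_a`. -/
def singTinv : Set ℝ := Set.Ioo E.l E.r \ ⋃ a, E.Ja a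

/-- A connection of length `n`: a triple `(x, y, n)` where `x` is a singularity of
`T⁻¹`, `y` is a singularity of `T`, and `Tⁿ x = y`, the orbit of `x` being defined
up to time `n`. -/
def IsConnection (x y : ℝ) (n : ℕ) : Prop :=
  x ∈ E.singTinv ∧ y ∈ E.singT ∧ E.T^[n] x = y ∧ ∀ i < n, E.T^[i] x ∉ E.singT

end IET

variable {A : Type*}

/-- The vertex set of the extension graph of `w` : the disjoint union of (a copy of)
`L_S(w)` and (a copy of) `R_S(w)`. -/
def extVerts (S : Set (List A)) (w : List A) : Set (A ⊕ A) :=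
  {v | Sum.elim (fun a => a :: w ∈ S) (fun b => w ++ [b] ∈ S) v}

/-- The edge relation of the extension graph of `w`: `1 ⊗ a` is joined to `b ⊗ 1`
whenever `awb ∈ S`. -/
def extRel (S : Set (List A)) (w : List A) : (A ⊕ A) → (A ⊕ A) → Prop :=
  fun u v => ∃ a b : A, u = Sum.inl a ∧ v = Sum.inr b ∧ a :: (w ++ [b]) ∈ S

/-- The extension graph `E(w)` of `w` with respect to `S`. -/
def extGraph (S : Set (List A)) (w : List A) : SimpleGraph (extVerts S w) :=
  SimpleGraph.induce (extVerts S w) (SimpleGraph.fromRel (extRel S w))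

end Paper

lemma Sum.disjoint_elim_of_isLeft_eq {α β γ : Type*} [PartialOrder γ] [OrderBot γ]
    {f : α → γ} {g : β → γ} (hf : Pairwise (Function.onFun Disjoint f))
    (hg : Pairwise (Function.onFun Disjoint g)) {x y : α ⊕ β} (hxy : x ≠ y)
    (h : x.isLeft = y.isLeft) : Disjoint (Sum.elim f g x) (Sum.elim f g y) := by
  rcases x with a | b <;> rcases y with a' | b'
  · exact hf (by simpa using hxy)
  · simp at h
  · simp at h
  · exact hg (by simpa using hxy)

namespace SimpleGraph

variable {V : Type*} {G : SimpleGraph V}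

namespace Walk.IsCycle

variable {u : V} {p : G.Walk u u}

lemma exists_next_dart (hp : p.IsCycle) {d : G.Dart} (hd : d ∈ p.darts) :
    ∃ e ∈ p.darts, e.fst = d.snd ∧ e.snd ≠ d.fst := by
  obtain ⟨i, hi, rfl⟩ := List.getElem_of_mem hd
  have h3 := hp.three_le_length
  have hi' : i < p.length := p.length_darts ▸ hi
  by_cases hlast : i + 1 < p.length
  · refine ⟨p.darts[i + 1]'(by rw [length_darts]; exact hlast), List.getElem_mem _, ?_, ?_⟩
    · simp [darts_getElem_eq_getVert]
    · simpa [darts_getElem_eq_getVert, add_assoc] using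
        (hp.getVert_sub_one_ne_getVert_add_one (i := i + 1) (by omega)).symm
  · have hi1 : i + 1 = p.length := by omega
    refine ⟨p.darts[0]'(by rw [length_darts]; omega), List.getElem_mem _, ?_, ?_⟩
    · simp [darts_getElem_eq_getVert, hi1]
    · simpa [darts_getElem_eq_getVert, show i = p.length - 1 by omega] using hp.snd_ne_penultimate

lemma exists_prev_dart (hp : p.IsCycle) {d : G.Dart} (hd : d ∈ p.darts) :
    ∃ e ∈ p.darts, e.snd = d.fst ∧ e.fst ≠ d.snd := by
  obtain ⟨e, he, hfst, hsnd⟩ := hp.reverse.exists_next_dart (d := d.symm) (by simpa using hd)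
  exact ⟨e.symm, mem_darts_reverse.mp he, hfst, hsnd⟩

end Walk.IsCycle

section OrdConnected

variable (S : V → Set ℝ) (hconv : ∀ v, (S v).OrdConnected)
  (hdisj : ∀ u v w, G.Adj u v → G.Adj v w → u ≠ w → Disjoint (S u) (S w))
include hconv hdisj

lemma lt_max_of_ordConnected {z a b c : V} (hza : G.Adj z a) (hab : G.Adj a b)
    (hbc : G.Adj b c) (hzb : z ≠ b) (hac : a ≠ c) {s t r : ℝ} (hs : s ∈ S z ∩ S a)
    (ht : t ∈ S a ∩ S b) (hr : r ∈ S b ∩ S c) : t < max s r := by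
  by_contra! hle
  rcases le_total s r with hsr | hrs
  · have hra : r ∈ S a := (hconv a).out hs.2 ht.1 ⟨hsr, le_of_max_le_right hle⟩
    exact Set.disjoint_left.mp (hdisj a b c hab hbc hac) hra hr.2
  · have hsb : s ∈ S b := (hconv b).out hr.1 ht.2 ⟨hrs, le_of_max_le_left hle⟩
    exact Set.disjoint_left.mp (hdisj z a b hza hab hzb) hs.1 hsb

theorem isAcyclic_of_ordConnected (hadj : ∀ u v, G.Adj u v → (S u ∩ S v).Nonempty) :
    G.IsAcyclic := by
  intro u p hp
  choose! x hx using hadj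
  have hdarts : (p.darts : Multiset G.Dart) ≠ 0 := by
    simpa using hp.not_nil
  obtain ⟨d, hd, hmax⟩ := Multiset.exists_max_image (fun d : G.Dart => x d.fst d.snd) hdarts
  obtain ⟨e, he, hfst, hne⟩ := hp.exists_next_dart hd
  obtain ⟨e', he', hsnd, hne'⟩ := hp.exists_prev_dart hd
  obtain ⟨⟨a, b⟩, hab⟩ := d
  obtain ⟨⟨b', c⟩, hbc⟩ := e
  obtain ⟨⟨z, a'⟩, hza⟩ := e'
  dsimp only at hfst hne hsnd hne' hmax
  subst hfst hsnd
  refine (lt_max_of_ordConnected S hconv hdisj hza hab hbc hne' hne.symm (hx _ _ hza)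
    (hx _ _ hab) (hx _ _ hbc)).not_ge (max_le ?_ ?_)
  exacts [hmax _ (Multiset.mem_coe.mpr he'), hmax _ (Multiset.mem_coe.mpr he)]

end OrdConnected

end SimpleGraph

namespace Paper

namespace IET

variable {A : Type*} [Fintype A] (E : IET A)

lemma ordConnected_Ia (a : A) : (E.Ia a).OrdConnected := by
  obtain ⟨p, q, -, h⟩ := E.hIa a
  exact h ▸ Set.ordConnected_Ioo

lemma ordConnected_Ja (a : A) : (E.Ja a).OrdConnected := by
  obtain ⟨p, q, -, h⟩ := E.hJa a
  exact h ▸ Set.ordConnected_Ioo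

lemma monotoneOn_or_antitoneOn (a : A) :
    MonotoneOn E.T (E.Ia a) ∨ AntitoneOn E.T (E.Ia a) := by
  rcases E.hTiso a with ⟨t, ht⟩ | ⟨s, hs⟩
  · exact .inl fun x hx y hy hxy => by rw [ht x hx, ht y hy]; linarith
  · exact .inr fun x hx y hy hxy => by rw [hs x hx, hs y hy]; linarith

lemma Iw_nil : E.Iw [] = Set.Ioo E.l E.r := by
  ext x
  simp [Iw]

lemma Iw_cons (a : A) (u : List A) : E.Iw (a :: u) = E.Ia a ∩ E.T ⁻¹' E.Iw u := by
  ext x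
  simp only [Iw, Set.mem_ofPred_eq, Set.mem_inter_iff, Set.mem_preimage, List.length_cons,
    Fin.forall_fin_succ, Fin.val_zero, Function.iterate_zero, id_eq, List.get_eq_getElem,
    List.getElem_cons_zero, Fin.val_succ, Function.iterate_succ_apply, List.getElem_cons_succ]
  constructor
  · rintro ⟨-, ha, hu⟩
    exact ⟨ha, E.hJsub a (E.hTimage a ▸ Set.mem_image_of_mem _ ha), hu⟩
  · rintro ⟨ha, -, hu⟩
    exact ⟨E.hIsub a ha, ha, hu⟩

lemma ordConnected_Iw (u : List A) : (E.Iw u).OrdConnected := by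
  induction u with
  | nil => exact E.Iw_nil ▸ Set.ordConnected_Ioo
  | cons a u ih =>
    rw [Iw_cons]
    obtain ⟨C, hC, hIC⟩ := (E.monotoneOn_or_antitoneOn a).elim ih.preimage_monotoneOn
      ih.preimage_antitoneOn
    exact hIC ▸ (E.ordConnected_Ia a).inter hC

lemma pairwise_disjoint_Iw_append_singleton (w : List A) :
    Pairwise (Function.onFun Disjoint fun b => E.Iw (w ++ [b])) := by
  intro b b' hbb'
  refine Set.disjoint_left.mpr fun x hx hx' => ?_
  have hb := hx.2 ⟨w.length, by simp⟩
  have hb' := hx'.2 ⟨w.length, by simp⟩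
  simp only [List.get_eq_getElem, List.getElem_concat_length] at hb hb'
  exact Set.disjoint_left.mp (E.hIdisj hbb') hb hb'

lemma Iw_nonempty_of_mem_lang {u : List A} (hu : u ∈ E.lang) : (E.Iw u).Nonempty := by
  obtain ⟨z, -, horb, k, hk⟩ := hu
  obtain ⟨a, ha⟩ := Set.mem_iUnion.mp (horb k)
  refine ⟨E.T^[k] z, E.hIsub a ha, fun i => ?_⟩
  rw [← Function.iterate_add_apply, add_comm]
  exact hk i

lemma inter_Ja_Iw_nonempty_of_cons_mem_lang {a : A} {u : List A} (h : a :: u ∈ E.lang) :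
    (E.Ja a ∩ E.Iw u).Nonempty := by
  obtain ⟨x, hxa, hxu⟩ := E.Iw_cons a u ▸ E.Iw_nonempty_of_mem_lang h
  exact ⟨E.T x, E.hTimage a ▸ Set.mem_image_of_mem _ hxa, hxu⟩

end IET

variable {A : Type*} {S : Set (List A)} {w : List A}

lemma exists_of_extGraph_adj {u v : extVerts S w} (h : (extGraph S w).Adj u v) :
    ∃ a b, a :: (w ++ [b]) ∈ S ∧
      (u.1 = .inl a ∧ v.1 = .inr b ∨ u.1 = .inr b ∧ v.1 = .inl a) := by
  simp only [extGraph, SimpleGraph.comap_adj, SimpleGraph.fromRel_adj, extRel,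
    Function.Embedding.coe_subtype] at h
  obtain ⟨-, ⟨a, b, hu, hv, hab⟩ | ⟨a, b, hv, hu, hab⟩⟩ := h
  exacts [⟨a, b, hab, .inl ⟨hu, hv⟩⟩, ⟨a, b, hab, .inr ⟨hu, hv⟩⟩]

lemma isLeft_eq_of_extGraph_adj_adj {u v x : extVerts S w}
    (huv : (extGraph S w).Adj u v) (hvx : (extGraph S w).Adj v x) :
    u.1.isLeft = x.1.isLeft := by
  obtain ⟨a, b, -, ⟨hu, hv⟩ | ⟨hu, hv⟩⟩ := exists_of_extGraph_adj huv <;>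
  obtain ⟨a', b', -, ⟨hv', hx⟩ | ⟨hv', hx⟩⟩ := exists_of_extGraph_adj hvx <;>
  simp_all

end Paper

open Paper Paper.IET in
theorem extGraph_acyclic_general
    {A : Type*} [Fintype A] (E : IET A) :
    ∀ w ∈ E.lang, (extGraph E.lang w).IsAcyclic := by
  intro w _
  refine SimpleGraph.isAcyclic_of_ordConnected
    (fun v => Sum.elim E.Ja (fun b => E.Iw (w ++ [b])) v.1) ?_ ?_ ?_
  · rintro ⟨a | b, -⟩
    exacts [E.ordConnected_Ja a, E.ordConnected_Iw _]
  · intro u v x huv hvx hux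
    exact Sum.disjoint_elim_of_isLeft_eq E.hJdisj (E.pairwise_disjoint_Iw_append_singleton w)
      (Subtype.val_injective.ne hux) (isLeft_eq_of_extGraph_adj_adj huv hvx)
  · intro u v huv
    obtain ⟨a, b, hab, ⟨hu, hv⟩ | ⟨hu, hv⟩⟩ := exists_of_extGraph_adj huv
    · simpa [hu, hv] using E.inter_Ja_Iw_nonempty_of_cons_mem_lang hab
    · simpa [hu, hv, Set.inter_comm] using E.inter_Ja_Iw_nonempty_of_cons_mem_lang hab

open Paper Paper.IET in
/-- For an interval exchange transformation without connection of length `≥ 1`,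
the extension graph `E(w)` of every word `w ∈ L(T)` is acyclic. -/
theorem extGraph_acyclic
    {A : Type*} [Fintype A] (E : IET A)
    (hnc : ∀ x y : ℝ, ∀ n : ℕ, E.IsConnection x y n → n = 0) :
    ∀ w ∈ E.lang, (extGraph E.lang w).IsAcyclic :=
  extGraph_acyclic_general E
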